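/- arXiv:2605.13639 — 4 statements merged into one kernel-verified Lean document; each statement's English description precedes it below -/
import Mathlib

section
/- Let ν be a probability vector on S × A. Let π be a policy, π̃ another policy, ω ∈ [0,1], and π' = (1-ω)π + ωπ̃. Let Q : S × A → ℝ satisfy Q(s,a) ∈ [0, 1/(1−γ)] for all (s,a). Fix a sample u = (s₁,a₁,s₂) ∈ S × A × S, a stepsize α ∈ [0,1], and define the expected-TD critic update Q' by Q'(s₁,a₁) = Q(s₁,a₁) + α (R(s₁,a₁) + γ Σ_{a'} π'(a'|s₂) Q(s₂,a') − Q(s₁,a₁)) and Q'(s,a) = Q(s,a) for (s,a) ≠ (s₁,a₁). If 2ω ≤ α(1−γ), then (1/2)‖(Q' − Q) + (Q^{π} − Q^{π'})‖_ν² ≤ 2α²/(1−γ)². -/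
noncomputable section

/-- A policy assigns to each state a probability distribution over actions. -/
def IsPolicy {S A : Type*} [Fintype A] (π : S → A → ℝ) : Prop :=
  (∀ s a, 0 ≤ π s a) ∧ ∀ s, ∑ a, π s a = 1

/-- A transition kernel assigns to each state-action pair a probability distribution over states. -/
def IsKernel {S A : Type*} [Fintype S] (p : S → A → S → ℝ) : Prop :=
  (∀ s a s', 0 ≤ p s a s') ∧ ∀ s a, ∑ s', p s a s' = 1

/-- Sup norm on `S × A → ℝ` (functions `S → A → ℝ`). -/
def supNorm {S A : Type*} [Fintype S] [Fintype A] [Nonempty S] [Nonempty A]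
    (Q : S → A → ℝ) : ℝ :=
  Finset.univ.sup' Finset.univ_nonempty (fun sa : S × A => |Q sa.1 sa.2|)

/-- Total variation distance between two distributions on a finite set. -/
def dTV {Ω : Type*} [Fintype Ω] (p₁ p₂ : Ω → ℝ) : ℝ :=
  (∑ x, |p₁ x - p₂ x|) / 2

/-- Weighted ℓ₂ norm with weights ν. -/
def nuNorm {S A : Type*} [Fintype S] [Fintype A] (ν : S → A → ℝ) (Q : S → A → ℝ) : ℝ :=
  Real.sqrt (∑ s, ∑ a, ν s a * (Q s a) ^ 2)

/-- Weighted ℓ₂ inner product with weights ν. -/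
def nuInner {S A : Type*} [Fintype S] [Fintype A] (ν : S → A → ℝ) (Q₁ Q₂ : S → A → ℝ) : ℝ :=
  ∑ s, ∑ a, ν s a * Q₁ s a * Q₂ s a

/-- Bellman operator associated with a policy π. -/
def bellman {S A : Type*} [Fintype S] [Fintype A]
    (p : S → A → S → ℝ) (R : S → A → ℝ) (γ : ℝ) (π : S → A → ℝ)
    (Q : S → A → ℝ) : S → A → ℝ :=
  fun s a => R s a + γ * ∑ s', p s a s' * ∑ a', π s' a' * Q s' a'

/-- Bellman optimality operator. -/
def bellmanOpt {S A : Type*} [Fintype S] [Fintype A] [Nonempty A]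
    (p : S → A → S → ℝ) (R : S → A → ℝ) (γ : ℝ)
    (Q : S → A → ℝ) : S → A → ℝ :=
  fun s a => R s a + γ * ∑ s', p s a s' *
    Finset.univ.sup' Finset.univ_nonempty (fun a' => Q s' a')

/-- Expected operator F̄(Q,π) = (I − D)Q + D H_π Q, where D has diagonal entries μ_b(s)π_b(a|s). -/
def Fbar {S A : Type*} [Fintype S] [Fintype A]
    (p : S → A → S → ℝ) (R : S → A → ℝ) (γ : ℝ)
    (μb : S → ℝ) (πb : S → A → ℝ) (π : S → A → ℝ) (Q : S → A → ℝ) : S → A → ℝ :=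
  fun s a => (1 - μb s * πb s a) * Q s a + μb s * πb s a * bellman p R γ π Q s a

/-- Importance-sampling TD operator, for y = ((s₁,a₁),(s₂,a₂)). -/
def FIS {S A : Type*} [Fintype S] [Fintype A] [DecidableEq S] [DecidableEq A]
    (R : S → A → ℝ) (γ : ℝ) (πb : S → A → ℝ)
    (Q : S → A → ℝ) (y : (S × A) × S × A) (π : S → A → ℝ) : S → A → ℝ :=
  fun s a => if (s, a) = y.1 then
      R y.1.1 y.1.2 + γ * (π y.2.1 y.2.2 / πb y.2.1 y.2.2) * Q y.2.1 y.2.2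
    else Q s a

/-- Expected-TD operator, for u = (s₁,a₁,s₂). -/
def FETD {S A : Type*} [Fintype S] [Fintype A] [DecidableEq S] [DecidableEq A]
    (R : S → A → ℝ) (γ : ℝ)
    (Q : S → A → ℝ) (u : S × A × S) (π : S → A → ℝ) : S → A → ℝ :=
  fun s a => if (s, a) = (u.1, u.2.1) then
      R u.1 u.2.1 + γ * ∑ a', π u.2.2 a' * Q u.2.2 a'
    else Q s a

/-- State transition matrix induced by a policy. -/
def Pmat {S A : Type*} [Fintype A] (p : S → A → S → ℝ) (π : S → A → ℝ) : Matrix S S ℝ :=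
  Matrix.of fun s s' => ∑ a, π s a * p s a s'

end

/-!
`H_π` is a `γ`-contraction for the sup norm, so `‖Q^π‖ ≤ ‖R‖ / (1 - γ)` and
`‖Q^π - Q^{π'}‖ ≤ ‖H_π Q^π - H_{π'} Q^π‖ / (1 - γ) ≤ 2 γ ω ‖R‖ / (1 - γ)²`, because `H_{π'} - H_π`
only sees the `ω (π̃ - π)` part of the policy. The step condition `2ω ≤ α (1 - γ)` turns this
into `α / (1 - γ)`. The critic update changes `Q` in the single entry `(s₁, a₁)`, by `α` times
a TD error lying in `[-1/(1-γ), 1/(1-γ)]`. Every entry of the residual is therefore at most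
`2α / (1 - γ)` in absolute value, and so is its `ν`-norm.
-/

open Finset

section WeightedSum

variable {ι : Type*} [Fintype ι] {w f : ι → ℝ} {C : ℝ}

lemma sum_mul_le_of_forall_le (hw : ∀ i, 0 ≤ w i) (hw1 : ∑ i, w i = 1) (hf : ∀ i, f i ≤ C) :
    ∑ i, w i * f i ≤ C :=
  calc ∑ i, w i * f i ≤ ∑ i, w i * C :=
        sum_le_sum fun i _ => mul_le_mul_of_nonneg_left (hf i) (hw i)
    _ = C := by rw [← sum_mul, hw1, one_mul]

lemma abs_sum_mul_le_of_forall_abs_le (hw : ∀ i, 0 ≤ w i) (hw1 : ∑ i, w i = 1)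
    (hf : ∀ i, |f i| ≤ C) : |∑ i, w i * f i| ≤ C := by
  refine abs_le'.2 ⟨sum_mul_le_of_forall_le hw hw1 fun i => (le_abs_self _).trans (hf i), ?_⟩
  rw [← sum_neg_distrib]
  simp only [← mul_neg]
  exact sum_mul_le_of_forall_le hw hw1 fun i => (neg_le_abs _).trans (hf i)

end WeightedSum

lemma abs_sub_le_of_update {S A : Type*} {Q Q' : S → A → ℝ} {s₁ : S} {a₁ : A} {α δ C : ℝ}
    (hα : 0 ≤ α) (hδ : |δ| ≤ C) (hupd : Q' s₁ a₁ = Q s₁ a₁ + α * δ)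
    (hrest : ∀ s a, (s, a) ≠ (s₁, a₁) → Q' s a = Q s a) (s : S) (a : A) :
    |Q' s a - Q s a| ≤ α * C := by
  by_cases h : (s, a) = (s₁, a₁)
  · obtain ⟨rfl, rfl⟩ := Prod.ext_iff.1 h
    rw [hupd, add_sub_cancel_left, abs_mul, abs_of_nonneg hα]
    exact mul_le_mul_of_nonneg_left hδ hα
  · rw [hrest s a h, sub_self, abs_zero]
    exact mul_nonneg hα ((abs_nonneg δ).trans hδ)

lemma IsPolicy.mix {S A : Type*} [Fintype A] {π πt : S → A → ℝ} (hπ : IsPolicy π)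
    (hπt : IsPolicy πt) {ω : ℝ} (hω0 : 0 ≤ ω) (hω1 : ω ≤ 1) : IsPolicy ((1 - ω) • π + ω • πt) := by
  refine ⟨fun s a => ?_, fun s => ?_⟩
  · have := hπ.1 s a
    have := hπt.1 s a
    simp only [Pi.add_apply, Pi.smul_apply, smul_eq_mul]
    positivity
  · simp only [Pi.add_apply, Pi.smul_apply, smul_eq_mul, sum_add_distrib, ← mul_sum, hπ.2 s,
      hπt.2 s]
    ring

section MDP

variable {S A : Type*} [Fintype S] [Fintype A]

lemma abs_apply_apply_le_norm (Q : S → A → ℝ) (s : S) (a : A) : |Q s a| ≤ ‖Q‖ :=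
  (norm_le_pi_norm (Q s) a).trans (norm_le_pi_norm Q s)

lemma norm_le_of_forall_abs_le {Q : S → A → ℝ} {C : ℝ} (hC : 0 ≤ C) (h : ∀ s a, |Q s a| ≤ C) :
    ‖Q‖ ≤ C :=
  (pi_norm_le_iff_of_nonneg hC).2 fun s => (pi_norm_le_iff_of_nonneg hC).2 fun a => h s a

lemma nuNorm_sq_le {ν f : S → A → ℝ} {C : ℝ} (hν0 : ∀ s a, 0 ≤ ν s a)
    (hν1 : ∑ s, ∑ a, ν s a = 1) (hf : ∀ s a, |f s a| ≤ C) : nuNorm ν f ^ 2 ≤ C ^ 2 := by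
  rw [nuNorm, Real.sq_sqrt (sum_nonneg fun s _ => sum_nonneg fun a _ =>
    mul_nonneg (hν0 s a) (sq_nonneg _))]
  rw [← Fintype.sum_prod_type'] at hν1 ⊢
  refine sum_mul_le_of_forall_le (fun x => hν0 x.1 x.2) hν1 fun x => ?_
  rw [← sq_abs]
  exact pow_le_pow_left₀ (abs_nonneg _) (hf x.1 x.2) 2

def transition (p : S → A → S → ℝ) (π Q : S → A → ℝ) : S → A → ℝ :=
  fun s a => ∑ s', p s a s' * ∑ a', π s' a' * Q s' a'

lemma bellman_eq_add_smul_transition (p : S → A → S → ℝ) (R : S → A → ℝ) (γ : ℝ)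
    (π Q : S → A → ℝ) : bellman p R γ π Q = R + γ • transition p π Q :=
  rfl

lemma bellman_zero (p : S → A → S → ℝ) (R : S → A → ℝ) (γ : ℝ) (π : S → A → ℝ) :
    bellman p R γ π 0 = R := by
  ext s a
  simp [bellman]

variable {p : S → A → S → ℝ}

lemma transition_sub (π Q₁ Q₂ : S → A → ℝ) :
    transition p π (Q₁ - Q₂) = transition p π Q₁ - transition p π Q₂ := by
  ext s a
  simp only [transition, Pi.sub_apply, mul_sub, sum_sub_distrib]

lemma transition_add_policy (π₁ π₂ Q : S → A → ℝ) :
    transition p (π₁ + π₂) Q = transition p π₁ Q + transition p π₂ Q := by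
  ext s a
  simp only [transition, Pi.add_apply, add_mul, mul_add, sum_add_distrib]

lemma transition_smul_policy (c : ℝ) (π Q : S → A → ℝ) :
    transition p (c • π) Q = c • transition p π Q := by
  ext s a
  simp only [transition, Pi.smul_apply, smul_eq_mul, mul_sum, mul_assoc, mul_left_comm]

lemma norm_transition_le (hp : IsKernel p) {π : S → A → ℝ} (hπ : IsPolicy π) (Q : S → A → ℝ) :
    ‖transition p π Q‖ ≤ ‖Q‖ :=
  norm_le_of_forall_abs_le (norm_nonneg Q) fun s a =>
    abs_sum_mul_le_of_forall_abs_le (hp.1 s a) (hp.2 s a) fun s' =>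
      abs_sum_mul_le_of_forall_abs_le (hπ.1 s') (hπ.2 s') fun a' =>
        abs_apply_apply_le_norm Q s' a'

lemma norm_transition_mix_sub_le (hp : IsKernel p) {π πt : S → A → ℝ} (hπ : IsPolicy π)
    (hπt : IsPolicy πt) {ω : ℝ} (hω : 0 ≤ ω) (Q : S → A → ℝ) :
    ‖transition p ((1 - ω) • π + ω • πt) Q - transition p π Q‖ ≤ 2 * ω * ‖Q‖ := by
  have hdiff : transition p ((1 - ω) • π + ω • πt) Q - transition p π Q
      = ω • (transition p πt Q - transition p π Q) := by
    rw [transition_add_policy, transition_smul_policy, transition_smul_policy]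
    module
  rw [hdiff, norm_smul, Real.norm_of_nonneg hω]
  calc ω * ‖transition p πt Q - transition p π Q‖ ≤ ω * (‖Q‖ + ‖Q‖) := by
        gcongr
        exact (norm_sub_le _ _).trans
          (add_le_add (norm_transition_le hp hπt Q) (norm_transition_le hp hπ Q))
    _ = 2 * ω * ‖Q‖ := by ring

variable {R : S → A → ℝ} {γ : ℝ} {π : S → A → ℝ}

theorem contractingWith_bellman (hp : IsKernel p) (hπ : IsPolicy π) (hγ0 : 0 ≤ γ)
    (hγ1 : γ < 1) : ContractingWith ⟨γ, hγ0⟩ (bellman p R γ π) := by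
  refine ⟨hγ1, LipschitzWith.of_dist_le_mul fun Q₁ Q₂ => ?_⟩
  rw [dist_eq_norm, dist_eq_norm, bellman_eq_add_smul_transition,
    bellman_eq_add_smul_transition, add_sub_add_left_eq_sub, ← smul_sub, ← transition_sub,
    norm_smul, Real.norm_of_nonneg hγ0]
  exact mul_le_mul_of_nonneg_left (norm_transition_le hp hπ _) hγ0

lemma norm_le_of_bellman_eq_self (hp : IsKernel p) (hπ : IsPolicy π) (hγ0 : 0 ≤ γ)
    (hγ1 : γ < 1) {Q : S → A → ℝ} (hQ : bellman p R γ π Q = Q) : ‖Q‖ ≤ ‖R‖ / (1 - γ) := by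
  have h := (contractingWith_bellman hp hπ hγ0 hγ1).dist_le_of_fixedPoint 0 hQ
  rwa [dist_zero_left, bellman_zero, dist_zero_left] at h

theorem norm_sub_le_of_bellman_mix (hp : IsKernel p) (hπ : IsPolicy π) {πt : S → A → ℝ}
    (hπt : IsPolicy πt) (hγ0 : 0 ≤ γ) (hγ1 : γ < 1) {ω : ℝ} (hω0 : 0 ≤ ω) (hω1 : ω ≤ 1)
    {Qπ Qπ' : S → A → ℝ} (hQπ : bellman p R γ π Qπ = Qπ)
    (hQπ' : bellman p R γ ((1 - ω) • π + ω • πt) Qπ' = Qπ') :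
    ‖Qπ - Qπ'‖ ≤ 2 * γ * ω * ‖R‖ / (1 - γ) ^ 2 := by
  have hshift : dist Qπ (bellman p R γ ((1 - ω) • π + ω • πt) Qπ)
      ≤ γ * (2 * ω * (‖R‖ / (1 - γ))) := by
    calc dist Qπ (bellman p R γ ((1 - ω) • π + ω • πt) Qπ)
        = ‖bellman p R γ ((1 - ω) • π + ω • πt) Qπ - bellman p R γ π Qπ‖ := by
          rw [hQπ, dist_comm, dist_eq_norm]
      _ = γ * ‖transition p ((1 - ω) • π + ω • πt) Qπ - transition p π Qπ‖ := by
          rw [bellman_eq_add_smul_transition, bellman_eq_add_smul_transition,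
            add_sub_add_left_eq_sub, ← smul_sub, norm_smul, Real.norm_of_nonneg hγ0]
      _ ≤ γ * (2 * ω * (‖R‖ / (1 - γ))) := by
          gcongr
          exact (norm_transition_mix_sub_le hp hπ hπt hω0 Qπ).trans
            (by gcongr; exact norm_le_of_bellman_eq_self hp hπ hγ0 hγ1 hQπ)
  calc ‖Qπ - Qπ'‖ = dist Qπ Qπ' := (dist_eq_norm _ _).symm
    _ ≤ dist Qπ (bellman p R γ ((1 - ω) • π + ω • πt) Qπ) / (1 - γ) :=
        (contractingWith_bellman hp (hπ.mix hπt hω0 hω1) hγ0 hγ1).dist_le_of_fixedPoint Qπ hQπ'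
    _ ≤ γ * (2 * ω * (‖R‖ / (1 - γ))) / (1 - γ) := by gcongr
    _ = 2 * γ * ω * ‖R‖ / (1 - γ) ^ 2 := by field_simp

end MDP

lemma abs_tdError_le {S A : Type*} [Fintype A] {R : S → A → ℝ} {γ : ℝ} {π : S → A → ℝ}
    (hR : ∀ s a, 0 ≤ R s a ∧ R s a ≤ 1) (hγ0 : 0 ≤ γ) (hγ1 : γ < 1)
    (hπ : IsPolicy π) {Q : S → A → ℝ} (hQ : ∀ s a, 0 ≤ Q s a ∧ Q s a ≤ 1 / (1 - γ))
    (s₁ : S) (a₁ : A) (s₂ : S) :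
    |R s₁ a₁ + γ * (∑ a', π s₂ a' * Q s₂ a') - Q s₁ a₁| ≤ 1 / (1 - γ) := by
  have hV0 : 0 ≤ ∑ a', π s₂ a' * Q s₂ a' :=
    sum_nonneg fun a' _ => mul_nonneg (hπ.1 s₂ a') (hQ s₂ a').1
  have hV1 : ∑ a', π s₂ a' * Q s₂ a' ≤ 1 / (1 - γ) :=
    sum_mul_le_of_forall_le (hπ.1 s₂) (hπ.2 s₂) fun a' => (hQ s₂ a').2
  have hM : 1 + γ * (1 / (1 - γ)) = 1 / (1 - γ) := by
    field_simp [(sub_pos.2 hγ1).ne']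
    ring
  refine abs_sub_le_of_nonneg_of_le ?_ ?_ (hQ s₁ a₁).1 (hQ s₁ a₁).2
  · exact add_nonneg (hR s₁ a₁).1 (mul_nonneg hγ0 hV0)
  · rw [← hM]
    exact add_le_add (hR s₁ a₁).2 (mul_le_mul_of_nonneg_left hV1 hγ0)

theorem residual_bound_ETD_general {S A : Type*} [Fintype S] [Fintype A]
    (p : S → A → S → ℝ) (hp : IsKernel p)
    (R : S → A → ℝ) (hR : ∀ s a, 0 ≤ R s a ∧ R s a ≤ 1)
    (γ : ℝ) (hγ : 0 < γ ∧ γ < 1)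
    (ν : S → A → ℝ) (hνnonneg : ∀ s a, 0 ≤ ν s a) (hνsum : ∑ s, ∑ a, ν s a = 1)
    (π πt π' : S → A → ℝ) (hπ : IsPolicy π) (hπt : IsPolicy πt)
    (ω : ℝ) (hω : 0 ≤ ω ∧ ω ≤ 1)
    (hπ' : ∀ s a, π' s a = (1 - ω) * π s a + ω * πt s a)
    (Q Qpi Qpi' : S → A → ℝ)
    (hQrange : ∀ s a, 0 ≤ Q s a ∧ Q s a ≤ 1 / (1 - γ))
    (hQpi : bellman p R γ π Qpi = Qpi)
    (hQpi' : bellman p R γ π' Qpi' = Qpi')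
    (s₁ : S) (a₁ : A) (s₂ : S)
    (α : ℝ) (hα : 0 ≤ α ∧ α ≤ 1)
    (Q' : S → A → ℝ)
    (hQ'upd : Q' s₁ a₁
      = Q s₁ a₁ + α * (R s₁ a₁ + γ * (∑ a', π' s₂ a' * Q s₂ a') - Q s₁ a₁))
    (hQ'rest : ∀ s a, (s, a) ≠ (s₁, a₁) → Q' s a = Q s a)
    (hstep : 2 * ω ≤ α * (1 - γ)) :
    (1 / 2) * nuNorm ν (fun s a => (Q' s a - Q s a) + (Qpi s a - Qpi' s a)) ^ 2
      ≤ 2 * α ^ 2 / (1 - γ) ^ 2 := by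
  obtain ⟨hγ0, hγ1⟩ := hγ
  obtain rfl : π' = (1 - ω) • π + ω • πt := by ext s a; simp [hπ']
  have hR1 : ‖R‖ ≤ 1 := norm_le_of_forall_abs_le zero_le_one fun s a =>
    abs_le.2 ⟨by linarith [(hR s a).1], (hR s a).2⟩
  have hQpi_sub : ‖Qpi - Qpi'‖ ≤ α / (1 - γ) := by
    refine (norm_sub_le_of_bellman_mix hp hπ hπt hγ0.le hγ1 hω.1 hω.2 hQpi hQpi').trans ?_
    have : 2 * γ * ω * ‖R‖ ≤ α * (1 - γ) := by
      nlinarith [mul_le_mul (hγ1.le) hR1 (norm_nonneg R) zero_le_one]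
    calc 2 * γ * ω * ‖R‖ / (1 - γ) ^ 2 ≤ α * (1 - γ) / (1 - γ) ^ 2 := by gcongr
      _ = α / (1 - γ) := by field_simp
  have hQ'_sub := abs_sub_le_of_update hα.1
    (abs_tdError_le hR hγ0.le hγ1 (hπ.mix hπt hω.1 hω.2) hQrange s₁ a₁ s₂) hQ'upd hQ'rest
  have hpt : ∀ s a, |(Q' s a - Q s a) + (Qpi s a - Qpi' s a)| ≤ 2 * α / (1 - γ) := fun s a =>
    calc |(Q' s a - Q s a) + (Qpi s a - Qpi' s a)|
        ≤ α * (1 / (1 - γ)) + α / (1 - γ) :=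
          (abs_add_le _ _).trans (add_le_add (hQ'_sub s a)
            ((abs_apply_apply_le_norm (Qpi - Qpi') s a).trans hQpi_sub))
      _ = 2 * α / (1 - γ) := by ring
  calc (1 / 2) * nuNorm ν (fun s a => (Q' s a - Q s a) + (Qpi s a - Qpi' s a)) ^ 2
      ≤ (1 / 2) * (2 * α / (1 - γ)) ^ 2 :=
        mul_le_mul_of_nonneg_left (nuNorm_sq_le hνnonneg hνsum hpt) one_half_pos.le
    _ = 2 * α ^ 2 / (1 - γ) ^ 2 := by rw [div_pow]; ring

/-- Bound on the residual term for the ETD-based critic update (Lemma B.6). -/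
theorem residual_bound_ETD {S A : Type*} [Fintype S] [Fintype A] [Nonempty S] [Nonempty A]
    (p : S → A → S → ℝ) (hp : IsKernel p)
    (R : S → A → ℝ) (hR : ∀ s a, 0 ≤ R s a ∧ R s a ≤ 1)
    (γ : ℝ) (hγ : 0 < γ ∧ γ < 1)
    (ν : S → A → ℝ) (hνnonneg : ∀ s a, 0 ≤ ν s a) (hνsum : ∑ s, ∑ a, ν s a = 1)
    (π πt π' : S → A → ℝ) (hπ : IsPolicy π) (hπt : IsPolicy πt)
    (ω : ℝ) (hω : 0 ≤ ω ∧ ω ≤ 1)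
    (hπ' : ∀ s a, π' s a = (1 - ω) * π s a + ω * πt s a)
    (Q Qpi Qpi' : S → A → ℝ)
    (hQrange : ∀ s a, 0 ≤ Q s a ∧ Q s a ≤ 1 / (1 - γ))
    (hQpi : bellman p R γ π Qpi = Qpi)
    (hQpi' : bellman p R γ π' Qpi' = Qpi')
    (s₁ : S) (a₁ : A) (s₂ : S)
    (α : ℝ) (hα : 0 ≤ α ∧ α ≤ 1)
    (Q' : S → A → ℝ)
    (hQ'upd : Q' s₁ a₁
      = Q s₁ a₁ + α * (R s₁ a₁ + γ * (∑ a', π' s₂ a' * Q s₂ a') - Q s₁ a₁))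
    (hQ'rest : ∀ s a, (s, a) ≠ (s₁, a₁) → Q' s a = Q s a)
    (hstep : 2 * ω ≤ α * (1 - γ)) :
    (1 / 2) * nuNorm ν (fun s a => (Q' s a - Q s a) + (Qpi s a - Qpi' s a)) ^ 2
      ≤ 2 * α ^ 2 / (1 - γ) ^ 2 :=
  residual_bound_ETD_general p hp R hR γ hγ ν hνnonneg hνsum π πt π' hπ hπt ω hω hπ' Q Qpi Qpi'
    hQrange hQpi hQpi' s₁ a₁ s₂ α hα Q' hQ'upd hQ'rest hstep
end

section
/- Let {Q_t} be defined by Q_0 = 0 and, for each t ≥ 0, Q_{t+1}(s_t,a_t) = Q_t(s_t,a_t) + α_t (R(s_t,a_t) + γ Σ_{a'} π_{t+1}(a'|s_{t+1}') Q_t(s_{t+1}',a') − Q_t(s_t,a_t)) and Q_{t+1}(s,a) = Q_t(s,a) for (s,a) ≠ (s_t,a_t), where (s_t,a_t,s_{t+1}') ∈ S × A × S are arbitrary samples, π_{t+1} are arbitrary policies, and α_t ∈ [0,1]. Then for all nonnegative integers t₁ < t₂, ‖Q_{t₁} − Q_{t₂}‖∞ ≤ (Σ_{u=t₁}^{t₂−1}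 α_u)/(1−γ). -/
/-!
Every iterate takes values in `[0, 1/(1-γ)]`: the TD target `R + γ ∑ π Q` is a reward in `[0,1]`
plus `γ` times a convex combination of values in that interval, and `Q t + α (target - Q t)` is a
convex combination of two points of it. Hence one update moves a single entry by at most
`α_t / (1-γ)`, and the drift bound follows by telescoping.
-/

open Set

theorem IsPolicy.sum_mul_mem_Icc {S A : Type*} [Fintype A] {π : S → A → ℝ} (hπ : IsPolicy π)
    (s : S) {q : A → ℝ} {M : ℝ} (hq : ∀ a, q a ∈ Icc 0 M) :
    ∑ a, π s a * q a ∈ Icc 0 M :=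
  (convex_Icc 0 M).sum_mem (fun a _ => hπ.1 s a) (hπ.2 s) fun a _ => hq a

theorem add_mul_mem_Icc_one_div_one_sub {r γ v : ℝ} (hr : r ∈ Icc 0 1) (hγ : γ ∈ Ico 0 1)
    (hv : v ∈ Icc 0 (1 / (1 - γ))) : r + γ * v ∈ Icc 0 (1 / (1 - γ)) := by
  obtain ⟨hγ0, hγ1⟩ := hγ
  refine ⟨add_nonneg hr.1 (mul_nonneg hγ0 hv.1), ?_⟩
  calc r + γ * v ≤ 1 + γ * (1 / (1 - γ)) :=
        add_le_add hr.2 (mul_le_mul_of_nonneg_left hv.2 hγ0)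
    _ = 1 / (1 - γ) := by
      field_simp [(sub_pos.2 hγ1).ne']
      ring

section UpdateAt

variable {S A : Type*} {Q Q' : S → A → ℝ} {s₀ : S} {a₀ : A} {α y M : ℝ}

theorem mem_Icc_of_update_at (hupd : Q' s₀ a₀ = Q s₀ a₀ + α * (y - Q s₀ a₀))
    (hrest : ∀ s a, (s, a) ≠ (s₀, a₀) → Q' s a = Q s a) (hQ : ∀ s a, Q s a ∈ Icc 0 M)
    (hy : y ∈ Icc 0 M) (hα : α ∈ Icc 0 1) (s : S) (a : A) : Q' s a ∈ Icc 0 M := by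
  by_cases hsa : (s, a) = (s₀, a₀)
  · obtain ⟨rfl, rfl⟩ := Prod.mk.inj hsa
    rw [hupd]
    exact (convex_Icc 0 M).add_smul_sub_mem (hQ s a) hy hα
  · rw [hrest s a hsa]
    exact hQ s a

theorem abs_sub_le_of_update_at (hupd : Q' s₀ a₀ = Q s₀ a₀ + α * (y - Q s₀ a₀))
    (hrest : ∀ s a, (s, a) ≠ (s₀, a₀) → Q' s a = Q s a) (hQ : ∀ s a, Q s a ∈ Icc 0 M)
    (hy : y ∈ Icc 0 M) (hα : 0 ≤ α) (s : S) (a : A) : |Q s a - Q' s a| ≤ α * M := by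
  by_cases hsa : (s, a) = (s₀, a₀)
  · obtain ⟨rfl, rfl⟩ := Prod.mk.inj hsa
    have hyx : |y - Q s a| ≤ M :=
      abs_sub_le_of_nonneg_of_le hy.1 hy.2 (hQ s a).1 (hQ s a).2
    rw [hupd, sub_add_cancel_left, abs_neg, abs_mul, abs_of_nonneg hα]
    exact mul_le_mul_of_nonneg_left hyx hα
  · rw [hrest s a hsa, sub_self, abs_zero]
    exact mul_nonneg hα ((hQ s a).1.trans (hQ s a).2)

end UpdateAt

theorem supNorm_sub_le_sum_Ico {S A : Type*} [Fintype S] [Fintype A] [Nonempty S] [Nonempty A]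
    {Q : ℕ → S → A → ℝ} {d : ℕ → ℝ} (hstep : ∀ t s a, |Q t s a - Q (t + 1) s a| ≤ d t)
    {t₁ t₂ : ℕ} (h : t₁ ≤ t₂) :
    supNorm (fun s a => Q t₁ s a - Q t₂ s a) ≤ ∑ u ∈ Finset.Ico t₁ t₂, d u := by
  refine Finset.sup'_le _ _ fun sa _ => ?_
  simpa only [Real.dist_eq] using
    dist_le_Ico_sum_of_dist_le (f := fun t => Q t sa.1 sa.2) h fun _ _ => by
      simpa only [Real.dist_eq] using hstep _ sa.1 sa.2

/-- Drift bound for the ETD critic iterates (Lemma B.5, part 3). -/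
theorem ETD_iterates_drift {S A : Type*} [Fintype S] [Fintype A] [Nonempty S] [Nonempty A]
    (R : S → A → ℝ) (hR : ∀ s a, 0 ≤ R s a ∧ R s a ≤ 1)
    (γ : ℝ) (hγ : 0 < γ ∧ γ < 1)
    (st : ℕ → S) (at' : ℕ → A) (st' : ℕ → S)
    (πs : ℕ → S → A → ℝ) (hπs : ∀ t, IsPolicy (πs t))
    (α : ℕ → ℝ) (hα : ∀ t, 0 ≤ α t ∧ α t ≤ 1)
    (Q : ℕ → S → A → ℝ)
    (hQ0 : ∀ s a, Q 0 s a = 0)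
    (hupd : ∀ t, Q (t + 1) (st t) (at' t)
      = Q t (st t) (at' t) + α t * (R (st t) (at' t)
          + γ * (∑ a', πs (t + 1) (st' t) a' * Q t (st' t) a') - Q t (st t) (at' t)))
    (hrest : ∀ t s a, (s, a) ≠ (st t, at' t) → Q (t + 1) s a = Q t s a)
    (t₁ t₂ : ℕ) (h : t₁ < t₂) :
    supNorm (fun s a => Q t₁ s a - Q t₂ s a)
      ≤ (∑ u ∈ Finset.Ico t₁ t₂, α u) / (1 - γ) := by
  have hM : 0 ≤ 1 / (1 - γ) := one_div_nonneg.2 (sub_pos.2 hγ.2).le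
  have target_mem : ∀ t, (∀ s a, Q t s a ∈ Icc 0 (1 / (1 - γ))) →
      R (st t) (at' t) + γ * ∑ a', πs (t + 1) (st' t) a' * Q t (st' t) a'
        ∈ Icc 0 (1 / (1 - γ)) := fun t hQt =>
    add_mul_mem_Icc_one_div_one_sub (hR _ _) ⟨hγ.1.le, hγ.2⟩
      ((hπs (t + 1)).sum_mul_mem_Icc _ fun a => hQt _ a)
  have bounded : ∀ t s a, Q t s a ∈ Icc 0 (1 / (1 - γ)) := by
    intro t
    induction t with
    | zero => simpa only [hQ0] using fun _ _ => ⟨le_rfl, hM⟩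
    | succ t ih => exact mem_Icc_of_update_at (hupd t) (hrest t) ih (target_mem t ih) (hα t)
  calc supNorm (fun s a => Q t₁ s a - Q t₂ s a)
      ≤ ∑ u ∈ Finset.Ico t₁ t₂, α u * (1 / (1 - γ)) :=
        supNorm_sub_le_sum_Ico (fun t => abs_sub_le_of_update_at (hupd t) (hrest t) (bounded t)
          (target_mem t (bounded t)) (hα t).1) h.le
    _ = (∑ u ∈ Finset.Ico t₁ t₂, α u) / (1 - γ) := by rw [← Finset.sum_mul, mul_one_div]
end

section
/- The following are equivalent: (1) there exists a policy π whose induced state transition matrix P_π is irreducible, i.e., for all s, s' ∈ S there exists T ≥ 1 with (P_π)^T(s,s') > 0; (2) every positive policy π_b (one with π_b(a|s) > 0 for all s ∈ S and a ∈ A) has irreducible induced state transition matrix P_{π_b}. -/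
lemma matpow_nonneg {S : Type*} [Fintype S] [DecidableEq S] {M : Matrix S S ℝ}
    (hM : ∀ i j, 0 ≤ M i j) : ∀ T i j, 0 ≤ (M ^ T) i j := by
  intro T
  induction T with
  | zero => intro i j; simp [Matrix.one_apply]; positivity
  | succ n ih =>
    intro i j
    rw [pow_succ, Matrix.mul_apply]
    exact Finset.sum_nonneg fun k _ => mul_nonneg (ih i k) (hM k j)

lemma matpow_dominate {S : Type*} [Fintype S] [DecidableEq S] {M N : Matrix S S ℝ}
    (hM : ∀ i j, 0 ≤ M i j) (hN : ∀ i j, 0 ≤ N i j)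
    (hdom : ∀ i j, 0 < M i j → 0 < N i j) :
    ∀ T i j, 0 < (M ^ T) i j → 0 < (N ^ T) i j := by
  intro T
  induction T with
  | zero => intro i j; simp
  | succ n ih =>
    intro i j h
    rw [pow_succ, Matrix.mul_apply] at h
    have : ∃ k, 0 < (M ^ n) i k * M k j := by
      by_contra hc
      push_neg at hc
      exact absurd h (not_lt.2 (Finset.sum_nonpos fun k _ => hc k))
    obtain ⟨k, hk⟩ := this
    have h1 : 0 < (M ^ n) i k :=
      lt_of_le_of_ne (matpow_nonneg hM n i k) (fun he => by rw [← he] at hk; simp at hk)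
    have h2 : 0 < M k j :=
      lt_of_le_of_ne (hM k j) (fun he => by rw [← he] at hk; simp at hk)
    rw [pow_succ, Matrix.mul_apply]
    have : 0 < (N ^ n) i k * N k j := mul_pos (ih i k h1) (hdom k j h2)
    refine lt_of_lt_of_le this ?_
    exact Finset.single_le_sum
      (fun l _ => mul_nonneg (matpow_nonneg hN n i l) (hN l j)) (Finset.mem_univ k)

lemma Pmat_nonneg {S A : Type*} [Fintype S] [Fintype A] {p : S → A → S → ℝ}
    (hp : IsKernel p) {π : S → A → ℝ} (hπ : ∀ s a, 0 ≤ π s a) :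
    ∀ s s', 0 ≤ Pmat p π s s' :=
  fun s s' => Finset.sum_nonneg fun a _ => mul_nonneg (hπ s a) (hp.1 s a s')

/-- Existence of one policy with irreducible induced state chain is equivalent
to every positive policy inducing an irreducible state chain (Lemma C.2). -/
theorem irreducible_policy_equivalence {S A : Type*}
    [Fintype S] [Fintype A] [Nonempty S] [Nonempty A] [DecidableEq S]
    (p : S → A → S → ℝ) (hp : IsKernel p) :
    (∃ π : S → A → ℝ, IsPolicy π ∧
        ∀ s s' : S, ∃ T : ℕ, 1 ≤ T ∧ 0 < (Pmat p π ^ T) s s')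
    ↔ (∀ πb : S → A → ℝ, IsPolicy πb → (∀ s a, 0 < πb s a) →
        ∀ s s' : S, ∃ T : ℕ, 1 ≤ T ∧ 0 < (Pmat p πb ^ T) s s') := by
  constructor
  · rintro ⟨π, hπ, hirr⟩ πb hπb hpos s s'
    obtain ⟨T, hT, hTpos⟩ := hirr s s'
    refine ⟨T, hT, ?_⟩
    refine matpow_dominate (Pmat_nonneg hp hπ.1) (Pmat_nonneg hp hπb.1) ?_ T s s' hTpos
    intro i j hij
    have : ∃ a, 0 < π i a * p i a j := by
      by_contra hc
      push_neg at hc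
      exact absurd hij (not_lt.2 (Finset.sum_nonpos fun a _ => hc a))
    obtain ⟨a, ha⟩ := this
    have hpa : 0 < p i a j :=
      lt_of_le_of_ne (hp.1 i a j) (fun he => by rw [← he] at ha; simp at ha)
    have : 0 < πb i a * p i a j := mul_pos (hpos i a) hpa
    exact lt_of_lt_of_le this (Finset.single_le_sum
      (fun b _ => mul_nonneg (hπb.1 i b) (hp.1 i b j)) (Finset.mem_univ a))
  · intro h
    refine ⟨fun _ _ => (Fintype.card A : ℝ)⁻¹, ?_, ?_⟩
    · constructor
      · intro s a; positivity
      · intro s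
        simp [Finset.sum_const, Finset.card_univ]
    · exact h _ ⟨fun s a => by positivity, fun s => by
        simp [Finset.sum_const, Finset.card_univ]⟩
        (fun s a => by
          have : (0:ℝ) < Fintype.card A := by exact_mod_cast Fintype.card_pos
          positivity)
end

section
/- Suppose there exist sequences s : ℕ → S and a : ℕ → A such that p(s_{t+1} | s_t, a_t) > 0 for every t ≥ 0, and every state x ∈ S satisfies s_t = x for infinitely many t. Then every positive policy π (one with π(a|s) > 0 for all (s,a)) has irreducible induced state transition matrix P_π, i.e., for all x, x' ∈ S there exists T ≥ 1 with (P_π)^T(x,x') > 0. Consequently, if no policy induces an irreducible state transition matrix, then no single trajectory of samples consistent with p can visit every state infinitely often. -/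
/-- If a single trajectory consistent with the kernel visits every state
infinitely often, then every positive policy induces an irreducible state chain
(Proposition C.1, minimality of the exploration assumption). -/
theorem trajectory_implies_irreducible {S A : Type*}
    [Fintype S] [Fintype A] [Nonempty S] [Nonempty A] [DecidableEq S]
    (p : S → A → S → ℝ) (hp : IsKernel p)
    (s : ℕ → S) (a : ℕ → A)
    (htraj : ∀ t, 0 < p (s t) (a t) (s (t + 1)))
    (hio : ∀ x : S, ∀ N : ℕ, ∃ t, N ≤ t ∧ s t = x) :
    ∀ π : S → A → ℝ, IsPolicy π → (∀ x b, 0 < π x b) →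
      ∀ x x' : S, ∃ T : ℕ, 1 ≤ T ∧ 0 < (Pmat p π ^ T) x x' := by
  intro π hπ hπpos x x'
  set P := Pmat p π with hP
  -- entries of P are nonneg
  have hPnn : ∀ u v : S, 0 ≤ P u v := by
    intro u v
    apply Finset.sum_nonneg
    intro b _
    exact mul_nonneg (hπ.1 u b) (hp.1 u b v)
  -- entries of P^n are nonneg
  have hPow : ∀ n : ℕ, ∀ u v : S, 0 ≤ (P ^ n) u v := by
    intro n
    induction n with
    | zero =>
      intro u v
      by_cases h : u = v
      · simp [h, Matrix.one_apply_eq]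
      · simp [Matrix.one_apply_ne h]
    | succ n ih =>
      intro u v
      rw [pow_succ, Matrix.mul_apply]
      exact Finset.sum_nonneg fun k _ => mul_nonneg (ih u k) (hPnn k v)
  -- one-step positivity along trajectory
  have hstep : ∀ t : ℕ, 0 < P (s t) (s (t + 1)) := by
    intro t
    apply Finset.sum_pos'
    · intro b _
      exact mul_nonneg (hπ.1 _ b) (hp.1 _ b _)
    · exact ⟨a t, Finset.mem_univ _, mul_pos (hπpos _ _) (htraj t)⟩
  -- k-step positivity along trajectory
  have hkey : ∀ k t : ℕ, 0 < (P ^ k) (s t) (s (t + k)) := by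
    intro k
    induction k with
    | zero => intro t; simp [Matrix.one_apply_eq]
    | succ k ih =>
      intro t
      rw [pow_succ, Matrix.mul_apply]
      apply Finset.sum_pos'
      · intro u _
        exact mul_nonneg (hPow k _ u) (hPnn u _)
      · refine ⟨s (t + k), Finset.mem_univ _, ?_⟩
        have := mul_pos (ih t) (hstep (t + k))
        simpa [add_assoc] using this
  obtain ⟨t, -, hts⟩ := hio x 0
  obtain ⟨t', ht', hts'⟩ := hio x' (t + 1)
  refine ⟨t' - t, ?_, ?_⟩
  · omega
  · have : t + (t' - t) = t' := by omega
    have h := hkey (t' - t) t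
    rw [this, hts, hts'] at h
    exact h
end
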